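/- For every poset P, the interval monoid Int(P) is a gcd-monoid if and only if P is a local lattice, i.e., for every x in P, the set of elements ≥ x is a meet-semilattice and the set of elements ≤ x is a join-semilattice. -/

import Mathlib

/-! Common definitions: multifractions, divisibility, interval monoids, zigzags. -/

section Defs

variable {M : Type*}

/-- A multifraction on a monoid `M`: a finite sequence with entries alternately in `M`
(sign `true`) and in a formal disjoint copy of `M` (sign `false`). -/
structure Multifraction (M : Type*) [Monoid M] where
  entries : List (Bool × M)
  alt : entries.Chain' fun p q => p.1 ≠ q.1

/-- The product of two multifraction entry lists: merge the adjacent entries when they have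
the same sign, concatenate otherwise. -/
def mfMul [Monoid M] (l₁ l₂ : List (Bool × M)) : List (Bool × M) :=
  match l₁.getLast?, l₂ with
  | some (b, x), (c, y) :: t =>
      if b = c then l₁.dropLast ++ (b, if b then x * y else y * x) :: t else l₁ ++ l₂
  | _, _ => l₁ ++ l₂

/-- The one-entry positive multifraction. -/
def mfPos [Monoid M] (x : M) : Multifraction M := ⟨[(true, x)], List.isChain_singleton _⟩

/-- The one-entry negative multifraction. -/
def mfNeg [Monoid M] (x : M) : Multifraction M := ⟨[(false, x)], List.isChain_singleton _⟩

/-- `a` left divides `b`. -/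
def LDvd [Monoid M] (a b : M) : Prop := ∃ c, a * c = b

/-- `a` right divides `b`. -/
def RDvd [Monoid M] (a b : M) : Prop := ∃ c, c * a = b

/-- `M` is (left and right) cancellative. -/
def Cancellative (M : Type*) [Monoid M] : Prop :=
  (∀ a b c : M, a * b = a * c → b = c) ∧ (∀ a b c : M, b * a = c * a → b = c)

/-- `1` is the only invertible element of `M`. -/
def TrivialUnits (M : Type*) [Monoid M] : Prop := ∀ a : M, IsUnit a → a = 1

/-- Any two elements admit a left gcd. -/
def HasLeftGcds (M : Type*) [Monoid M] : Prop :=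
  ∀ a b : M, ∃ d, LDvd d a ∧ LDvd d b ∧ ∀ e, LDvd e a → LDvd e b → LDvd e d

/-- Any two elements admit a right gcd. -/
def HasRightGcds (M : Type*) [Monoid M] : Prop :=
  ∀ a b : M, ∃ d, RDvd d a ∧ RDvd d b ∧ ∀ e, RDvd e a → RDvd e b → RDvd e d

/-- `M` is a gcd-monoid. -/
def GcdMonoidProp (M : Type*) [Monoid M] : Prop :=
  Cancellative M ∧ TrivialUnits M ∧ HasLeftGcds M ∧ HasRightGcds M

/-- `m` is a right lcm of `u` and `v`. -/
def IsRightLcm [Monoid M] (u v m : M) : Prop :=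
  LDvd u m ∧ LDvd v m ∧ ∀ w, LDvd u w → LDvd v w → LDvd m w

/-- `m` is a left lcm of `u` and `v`. -/
def IsLeftLcm [Monoid M] (u v m : M) : Prop :=
  RDvd u m ∧ RDvd v m ∧ ∀ w, RDvd u w → RDvd v w → RDvd m w

/-- `M` is a noetherian monoid: cancellative, with trivial units, and with well-founded
proper left and right divisibility. -/
def NoetherianMonoid (M : Type*) [Monoid M] : Prop :=
  Cancellative M ∧ TrivialUnits M ∧
    WellFounded (fun a b : M => LDvd a b ∧ a ≠ b) ∧
    WellFounded (fun a b : M => RDvd a b ∧ a ≠ b)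

/-- An atom of a monoid. -/
def MonAtom [Monoid M] (a : M) : Prop :=
  a ≠ 1 ∧ ∀ b c : M, a = b * c → b = 1 ∨ c = 1

/-- `η : M →* G` exhibits `G` as the enveloping (universal) group of `M`. -/
def IsEnvelopingGroup (M : Type*) [Monoid M] (G : Type*) [Group G] (η : M →* G) : Prop :=
  ∀ (H : Type*) [Group H] (f : M →* H), ∃! g : G →* H, g.comp η = f

/-- Evaluation of a multifraction in a group `G` through `η : M →* G`. -/
def mfEval [Monoid M] {G : Type*} [Group G] (η : M →* G) (a : Multifraction M) : G :=
  (a.entries.map fun p => if p.1 then η p.2 else (η p.2)⁻¹).prod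

/-- A multifraction is trivial if all its entries equal `1`. -/
def MfTrivial [Monoid M] (a : Multifraction M) : Prop := ∀ p ∈ a.entries, p.2 = 1

/-- `a` is a proper piece of `b` (relative to a monoid structure on multifractions). -/
def Piece [Monoid M] [Monoid (Multifraction M)] (a b : Multifraction M) : Prop :=
  ∃ c d : Multifraction M, b = c * a * d ∧ ¬(MfTrivial c ∧ MfTrivial d)

/-- The `j`-th entry of a multifraction (with default `(true, 1)`). -/
def mfEntry [Monoid M] (a : Multifraction M) (j : ℕ) : Bool × M :=
  (a.entries[j]?).getD (true, 1)

/-- The reduction rule `R_{i,x}` (here `j = i - 1` is the 0-based level):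
`b = a • R_{i,x}`. -/
def RedAt [Monoid M] (a b : Multifraction M) (j : ℕ) (x : M) : Prop :=
  b.entries.length = a.entries.length ∧ j + 1 < a.entries.length ∧
  (∀ k, ¬(j - 1 ≤ k ∧ k ≤ j + 1) → b.entries[k]? = a.entries[k]?) ∧
  (∀ k, (mfEntry b k).1 = (mfEntry a k).1) ∧
  (if (mfEntry a j).1 then
     if j = 0 then
       (mfEntry b 0).2 * x = (mfEntry a 0).2 ∧ (mfEntry b 1).2 * x = (mfEntry a 1).2
     else ∃ x' : M,
       (mfEntry b (j - 1)).2 = x' * (mfEntry a (j - 1)).2 ∧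
       (mfEntry b j).2 * x = x' * (mfEntry a j).2 ∧
       IsLeftLcm x (mfEntry a j).2 ((mfEntry b j).2 * x) ∧
       (mfEntry b (j + 1)).2 * x = (mfEntry a (j + 1)).2
   else
     if j = 0 then
       x * (mfEntry b 0).2 = (mfEntry a 0).2 ∧ x * (mfEntry b 1).2 = (mfEntry a 1).2
     else ∃ x' : M,
       (mfEntry b (j - 1)).2 = (mfEntry a (j - 1)).2 * x' ∧
       x * (mfEntry b j).2 = (mfEntry a j).2 * x' ∧
       IsRightLcm x (mfEntry a j).2 (x * (mfEntry b j).2) ∧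
       x * (mfEntry b (j + 1)).2 = (mfEntry a (j + 1)).2)

/-- One reduction step. -/
def Reduces [Monoid M] (a b : Multifraction M) : Prop := ∃ j x, x ≠ 1 ∧ RedAt a b j x

/-- A multifraction is reducible if some rule `R_{i,x}` with `x ≠ 1` applies to it. -/
def Reducible [Monoid M] (a : Multifraction M) : Prop := ∃ b, Reduces a b

/-- Iterated reduction. -/
def ReducesStar [Monoid M] : Multifraction M → Multifraction M → Prop :=
  Relation.ReflTransGen Reduces

/-- Semi-convergence of reduction (relative to an enveloping group `η : M →* G`):
every unital multifraction reduces to a trivial one. -/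
def SemiConvergent [Monoid M] {G : Type*} [Group G] (η : M →* G) : Prop :=
  ∀ a : Multifraction M, mfEval η a = 1 → ∃ b, ReducesStar a b ∧ MfTrivial b

end Defs

section Interval

variable (P : Type*) [PartialOrder P]

/-- The intervals of a poset `P`. -/
def Iv := {p : P × P // p.1 ≤ p.2}

/-- The defining relations of the interval monoid of `P`. -/
def intervalRel : FreeMonoid (Iv P) → FreeMonoid (Iv P) → Prop := fun u v =>
  (∃ (x y z : P) (hxy : x ≤ y) (hyz : y ≤ z),
      u = FreeMonoid.of ⟨(x, z), hxy.trans hyz⟩ ∧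
      v = FreeMonoid.of ⟨(x, y), hxy⟩ * FreeMonoid.of ⟨(y, z), hyz⟩) ∨
  (∃ x : P, u = FreeMonoid.of ⟨(x, x), le_refl x⟩ ∧ v = 1)

/-- The interval monoid of the poset `P`. -/
def IntervalMonoid := (conGen (intervalRel P)).Quotient

instance : Monoid (IntervalMonoid P) :=
  inferInstanceAs (Monoid (conGen (intervalRel P)).Quotient)

variable {P}

/-- The generator `[x, y]` of the interval monoid. -/
def intv (I : Iv P) : IntervalMonoid P := (conGen (intervalRel P)).mk' (FreeMonoid.of I)

variable (P)

/-- `P` is a local lattice: each `P^{≥ x}` is a meet-semilattice and each `P^{≤ x}` is a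
join-semilattice. -/
def LocalLattice : Prop :=
  (∀ x a b : P, x ≤ a → x ≤ b →
      ∃ m, x ≤ m ∧ m ≤ a ∧ m ≤ b ∧ ∀ c, x ≤ c → c ≤ a → c ≤ b → c ≤ m) ∧
  (∀ x a b : P, a ≤ x → b ≤ x →
      ∃ m, m ≤ x ∧ a ≤ m ∧ b ≤ m ∧ ∀ c, c ≤ x → a ≤ c → b ≤ c → m ≤ c)

/-- Noetherianity conditions on the poset `P`: no infinite descending chain in any `P^{≥ x}`
and no infinite ascending chain in any `P^{≤ x}`. -/
def PosetNoethCond : Prop :=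
  ∀ x : P, WellFounded (fun a b : {y : P // x ≤ y} => (a : P) < (b : P)) ∧
    WellFounded (fun a b : {y : P // y ≤ x} => (b : P) < (a : P))

variable {P}

/-- A simple multifraction on the interval monoid: each entry is a proper interval, and
consecutive entries share their target (at positive positions) or source (at negative ones). -/
def MfSimple (a : Multifraction (IntervalMonoid P)) : Prop :=
  ∃ l : List (Bool × Iv P),
    a.entries = l.map (fun p => (p.1, intv p.2)) ∧
    (∀ p ∈ l, p.2.1.1 ≠ p.2.1.2) ∧
    l.Chain' fun p q => if p.1 then p.2.1.2 = q.2.1.2 else p.2.1.1 = q.2.1.1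

/-- A positive `n`-zigzag in `P`. -/
def PosZigzag (n : ℕ) (x : ℕ → P) : Prop :=
  ∀ i ≤ n, i % 2 = 0 → (1 ≤ i → x i < x (i - 1)) ∧ (i < n → x i < x (i + 1))

/-- A negative `n`-zigzag in `P`. -/
def NegZigzag (n : ℕ) (x : ℕ → P) : Prop :=
  ∀ i ≤ n, i % 2 = 1 → (1 ≤ i → x i < x (i - 1)) ∧ (i < n → x i < x (i + 1))

/-- The zigzag `x` is simple: `x₁, ..., xₙ` are pairwise distinct. -/
def SimpleZz (n : ℕ) (x : ℕ → P) : Prop :=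
  ∀ i j, 1 ≤ i → i < j → j ≤ n → x i ≠ x j

/-- Reducibility of a zigzag at level `i`. -/
def ZzRedAt (n : ℕ) (x : ℕ → P) (i : ℕ) : Prop :=
  1 ≤ i ∧ i < n ∧
  ((2 ≤ i ∧ x i < x (i + 1) ∧
      ∃ y, x i < y ∧ y ≤ x (i + 1) ∧ ∃ u, x (i - 1) ≤ u ∧ y ≤ u) ∨
   (2 ≤ i ∧ x (i + 1) < x i ∧
      ∃ y, x (i + 1) ≤ y ∧ y < x i ∧ ∃ u, u ≤ x (i - 1) ∧ u ≤ y) ∨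
   (i = 1 ∧ x 0 < x 1 ∧ ∃ y, x 0 ≤ y ∧ y < x 1 ∧ x 2 ≤ y) ∨
   (i = 1 ∧ x 1 < x 0 ∧ ∃ y, x 1 < y ∧ y ≤ x 0 ∧ y ≤ x 2))

/-- A zigzag is reducible if it is reducible at some level. -/
def ZzReducible (n : ℕ) (x : ℕ → P) : Prop := ∃ i, ZzRedAt n x i

/-- The multifraction `a` is the image of the positive `n`-zigzag `x` under the map `F`. -/
def PosImage (n : ℕ) (x : ℕ → P) (a : Multifraction (IntervalMonoid P)) : Prop :=
  a.entries.length = n ∧ ∀ j < n,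
    if j % 2 = 0 then
      ∃ h : x j ≤ x (j + 1), a.entries[j]? = some (true, intv ⟨(x j, x (j + 1)), h⟩)
    else
      ∃ h : x (j + 1) ≤ x j, a.entries[j]? = some (false, intv ⟨(x (j + 1), x j), h⟩)

/-- The multifraction `a` is the image of the negative `n`-zigzag `x` under the map `F`. -/
def NegImage (n : ℕ) (x : ℕ → P) (a : Multifraction (IntervalMonoid P)) : Prop :=
  a.entries.length = n ∧ ∀ j < n,
    if j % 2 = 0 then
      ∃ h : x (j + 1) ≤ x j, a.entries[j]? = some (false, intv ⟨(x (j + 1), x j), h⟩)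
    else
      ∃ h : x j ≤ x (j + 1), a.entries[j]? = some (true, intv ⟨(x j, x (j + 1)), h⟩)

end Interval

/-!
Every element of `Int(P)` has a unique normal form, a word of nontrivial intervals no two
neighbours of which are composable; it is computed by letting the generators act on words from the
left. On normal forms, `d` left-divides `a` iff the word of `d` is a prefix of the word of `a`,
except that its last interval `[x, t]` may only be an initial segment of the corresponding
interval `[x, y]` of `a`. So if the normal forms of `a` and `b` agree up to intervals `[x, y]` and
`[x, y']`, their common left divisors end with `[x, t]`, `t ≤ y, y'`, and a greatest one exists for
all `a, b` iff every `P^{≥ x}` has meets; conversely `a = [x, y]`, `b = [x, y']` recover these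
meets from gcds. Reversing intervals identifies `Int(P)ᵐᵒᵖ` with `Int(Pᵒᵈ)`, which turns right
gcds into joins in the `P^{≤ x}` and left cancellation into right cancellation.
-/

open MulOpposite (op unop)

attribute [reducible] Iv

section Divisibility

variable {M N : Type*} [Monoid M] [Monoid N]

theorem ldvd_iff_dvd {a b : M} : LDvd a b ↔ a ∣ b := exists_congr fun _ => eq_comm

theorem rdvd_iff_op_dvd_op {a b : M} : RDvd a b ↔ op a ∣ op b :=
  (exists_congr fun _ => eq_comm).trans rightDvd_iff_op_dvd_op

theorem hasLeftGcds_iff_dvd :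
    HasLeftGcds M ↔ ∀ a b : M, ∃ d, d ∣ a ∧ d ∣ b ∧ ∀ e, e ∣ a → e ∣ b → e ∣ d := by
  simp only [HasLeftGcds, ldvd_iff_dvd]

theorem MulEquiv.hasLeftGcds_iff (e : M ≃* N) : HasLeftGcds M ↔ HasLeftGcds N := by
  simp only [hasLeftGcds_iff_dvd, e.surjective.forall, e.surjective.exists, map_dvd_iff]

theorem hasRightGcds_iff_hasLeftGcds_op : HasRightGcds M ↔ HasLeftGcds Mᵐᵒᵖ := by
  simp only [HasRightGcds, rdvd_iff_op_dvd_op, hasLeftGcds_iff_dvd,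
    MulOpposite.op_surjective.forall, MulOpposite.op_surjective.exists]

theorem cancellative_of_isCancelMul [IsCancelMul M] : Cancellative M :=
  ⟨fun _ _ _ => mul_left_cancel, fun _ _ _ => mul_right_cancel⟩

end Divisibility

def LocalMeets (P : Type*) [PartialOrder P] : Prop :=
  ∀ x a b : P, x ≤ a → x ≤ b → ∃ m, x ≤ m ∧ m ≤ a ∧ m ≤ b ∧ ∀ c, x ≤ c → c ≤ a → c ≤ b → c ≤ m

theorem localLattice_iff_localMeets (P : Type*) [PartialOrder P] :
    LocalLattice P ↔ LocalMeets P ∧ LocalMeets Pᵒᵈ :=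
  Iff.rfl

namespace IntervalMonoid

variable {P : Type*} [PartialOrder P]

theorem intv_trans {x y z : P} (hxy : x ≤ y) (hyz : y ≤ z) :
    intv ⟨(x, z), hxy.trans hyz⟩ = intv ⟨(x, y), hxy⟩ * intv ⟨(y, z), hyz⟩ :=
  (Con.eq _).2 (ConGen.Rel.of _ _ (Or.inl ⟨x, y, z, hxy, hyz, rfl, rfl⟩))

theorem intv_self (x : P) : intv ⟨(x, x), le_rfl⟩ = 1 :=
  (Con.eq _).2 (ConGen.Rel.of _ _ (Or.inr ⟨x, rfl, rfl⟩))

theorem intv_eq_one {I : Iv P} (h : I.1.1 = I.1.2) : intv I = 1 := by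
  obtain ⟨⟨x, y⟩, hxy⟩ := I
  obtain rfl : x = y := h
  exact intv_self x

def lift {M : Type*} [Monoid M] (f : Iv P → M)
    (trans : ∀ (x y z : P) (hxy : x ≤ y) (hyz : y ≤ z),
      f ⟨(x, z), hxy.trans hyz⟩ = f ⟨(x, y), hxy⟩ * f ⟨(y, z), hyz⟩)
    (self : ∀ x : P, f ⟨(x, x), le_rfl⟩ = 1) : IntervalMonoid P →* M :=
  Con.lift _ (FreeMonoid.lift f) <| Con.conGen_le.2 <| by
    rintro _ _ (⟨x, y, z, hxy, hyz, rfl, rfl⟩ | ⟨x, rfl, rfl⟩)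
    · simpa [Con.ker_rel] using trans x y z hxy hyz
    · simpa [Con.ker_rel] using self x

theorem lift_intv {M : Type*} [Monoid M] (f : Iv P → M) trans self (I : Iv P) :
    lift f trans self (intv I) = f I :=
  Con.lift_mk' _ _

@[elab_as_elim]
theorem induction_on {C : IntervalMonoid P → Prop} (a : IntervalMonoid P) (one : C 1)
    (intv_mul : ∀ I a, C a → C (intv I * a)) : C a := by
  induction a using Con.induction_on with
  | H w =>
    induction w using FreeMonoid.inductionOn' with
    | one => exact one
    | of_mul I w ih => exact intv_mul I _ ih

def ofWord (L : List (Iv P)) : IntervalMonoid P := (L.map intv).prod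

@[simp] theorem ofWord_nil : ofWord ([] : List (Iv P)) = 1 := rfl

@[simp] theorem ofWord_cons (I : Iv P) (L : List (Iv P)) :
    ofWord (I :: L) = intv I * ofWord L := List.prod_cons

open scoped Classical in
/-- On a normal form `L`, the normal form of `intv I * ofWord L`: a trivial `I` is dropped, and
an `I` composable with the first letter of `L` is merged with it. -/
noncomputable def normCons (I : Iv P) (L : List (Iv P)) : List (Iv P) :=
  if I.1.1 = I.1.2 then L else
    match L with
    | [] => [I]
    | K :: L =>
      if h : I.1.2 = K.1.1 then ⟨(I.1.1, K.1.2), I.2.trans (h.le.trans K.2)⟩ :: L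
      else I :: K :: L

section normCons

variable {I K : Iv P} {L : List (Iv P)}

theorem normCons_of_eq (h : I.1.1 = I.1.2) (L : List (Iv P)) : normCons I L = L := by
  simp [normCons, h]

theorem normCons_nil (h : I.1.1 ≠ I.1.2) : normCons I [] = [I] := by
  simp [normCons, h]

theorem normCons_cons_of_eq (h : I.1.1 ≠ I.1.2) (hK : I.1.2 = K.1.1) :
    normCons I (K :: L) = ⟨(I.1.1, K.1.2), I.2.trans (hK.le.trans K.2)⟩ :: L := by
  rw [normCons, if_neg h, dif_pos hK]

theorem normCons_cons_of_ne (h : I.1.1 ≠ I.1.2) (hK : I.1.2 ≠ K.1.1) :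
    normCons I (K :: L) = I :: K :: L := by
  rw [normCons, if_neg h, dif_neg hK]

end normCons

theorem normCons_trans {x y z : P} (hxy : x ≤ y) (hyz : y ≤ z) (L : List (Iv P)) :
    normCons ⟨(x, z), hxy.trans hyz⟩ L = normCons ⟨(x, y), hxy⟩ (normCons ⟨(y, z), hyz⟩ L) := by
  rcases eq_or_ne x y with rfl | hxy'
  · rw [normCons_of_eq (I := ⟨(x, x), hxy⟩) rfl]
  rcases eq_or_ne y z with rfl | hyz'
  · rw [normCons_of_eq (I := ⟨(y, y), hyz⟩) rfl]
  have hxz : x ≠ z := fun h => hxy' (le_antisymm hxy (h ▸ hyz))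
  rcases L with _ | ⟨K, L⟩
  · rw [normCons_nil (I := ⟨(y, z), hyz⟩) hyz', normCons_cons_of_eq (I := ⟨(x, y), hxy⟩) hxy' rfl,
      normCons_nil (I := ⟨(x, z), _⟩) hxz]
  rcases eq_or_ne z K.1.1 with hK | hK
  · rw [normCons_cons_of_eq (I := ⟨(y, z), hyz⟩) hyz' hK,
      normCons_cons_of_eq (I := ⟨(x, y), hxy⟩) hxy' rfl,
      normCons_cons_of_eq (I := ⟨(x, z), _⟩) hxz hK]
  · rw [normCons_cons_of_ne (I := ⟨(y, z), hyz⟩) hyz' hK,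
      normCons_cons_of_eq (I := ⟨(x, y), hxy⟩) hxy' rfl,
      normCons_cons_of_ne (I := ⟨(x, z), _⟩) hxz hK]

noncomputable def act : IntervalMonoid P →* Function.End (List (Iv P)) :=
  lift normCons (fun _ _ _ hxy hyz => funext (normCons_trans hxy hyz))
    (fun _ => funext (normCons_of_eq rfl))

/-- The normal form of an element: its word of nontrivial, pairwise non-composable intervals. -/
noncomputable def nf (a : IntervalMonoid P) : List (Iv P) := act a []

@[simp] theorem nf_one : nf (1 : IntervalMonoid P) = [] := rfl

@[simp] theorem nf_intv_mul (I : Iv P) (a : IntervalMonoid P) :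
    nf (intv I * a) = normCons I (nf a) := by
  simp only [nf, act, map_mul]
  rfl

theorem ofWord_normCons (I : Iv P) (L : List (Iv P)) :
    ofWord (normCons I L) = intv I * ofWord L := by
  by_cases h : I.1.1 = I.1.2
  · rw [normCons_of_eq h, intv_eq_one h, one_mul]
  rcases L with _ | ⟨K, L⟩
  · simp [normCons_nil h]
  by_cases hK : I.1.2 = K.1.1
  · obtain ⟨⟨x, y⟩, hxy⟩ := I
    obtain ⟨⟨y', z⟩, hyz⟩ := K
    obtain rfl : y = y' := hK
    rw [normCons_cons_of_eq (K := ⟨(y, z), hyz⟩) h rfl]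
    simp only [ofWord_cons, ← mul_assoc]
    exact congrArg (· * ofWord L) (intv_trans hxy hyz)
  · simp [normCons_cons_of_ne h hK]

@[simp] theorem ofWord_nf (a : IntervalMonoid P) : ofWord (nf a) = a := by
  induction a using induction_on with
  | one => rfl
  | intv_mul I a ih => rw [nf_intv_mul, ofWord_normCons, ih]

theorem nf_injective : Function.Injective (nf (P := P)) :=
  Function.LeftInverse.injective ofWord_nf

/-- Left divisibility of normal forms: `D` divides `A` iff `D` is a prefix of `A` except that its
last interval may be an initial segment of the corresponding interval of `A`. -/
inductive WordDvd : List (Iv P) → List (Iv P) → Prop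
  | nil (A : List (Iv P)) : WordDvd [] A
  | singleton {K L : Iv P} (A : List (Iv P)) (hfst : K.1.1 = L.1.1) (hsnd : K.1.2 ≤ L.1.2) :
      WordDvd [K] (L :: A)
  | cons (I : Iv P) {D A : List (Iv P)} : WordDvd D A → WordDvd (I :: D) (I :: A)

namespace WordDvd

theorem eq_nil {D : List (Iv P)} (h : WordDvd D []) : D = [] := by
  cases h
  rfl

theorem ofWord_dvd {D A : List (Iv P)} (h : WordDvd D A) : ofWord D ∣ ofWord A := by
  induction h with
  | nil A => exact one_dvd _
  | singleton A hfst hsnd =>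
    rename_i K L
    obtain ⟨⟨x, t⟩, hxt⟩ := K
    obtain ⟨⟨x', y⟩, hxy⟩ := L
    obtain rfl : x = x' := hfst
    simp only [ofWord_cons, ofWord_nil, mul_one]
    rw [intv_trans hxt hsnd, mul_assoc]
    exact dvd_mul_right _ _
  | cons I _ ih => simpa only [ofWord_cons] using mul_dvd_mul_left _ ih

theorem normCons {D A : List (Iv P)} (h : WordDvd D A) (I : Iv P) :
    WordDvd (normCons I D) (normCons I A) := by
  by_cases hI : I.1.1 = I.1.2
  · simpa only [normCons_of_eq hI] using h
  cases h with
  | nil A =>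
    rw [normCons_nil hI]
    rcases A with _ | ⟨K, A⟩
    · rw [normCons_nil hI]
      exact cons I (nil [])
    by_cases hK : I.1.2 = K.1.1
    · rw [normCons_cons_of_eq hI hK]
      exact singleton A rfl (hK.le.trans K.2)
    · rw [normCons_cons_of_ne hI hK]
      exact cons I (nil _)
  | singleton A hfst hsnd =>
    rename_i K L
    by_cases hK : I.1.2 = K.1.1
    · rw [normCons_cons_of_eq hI hK, normCons_cons_of_eq hI (hK.trans hfst)]
      exact singleton A rfl hsnd
    · rw [normCons_cons_of_ne hI hK, normCons_cons_of_ne hI (hfst ▸ hK)]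
      exact cons I (singleton A hfst hsnd)
  | cons K h =>
    by_cases hK : I.1.2 = K.1.1
    · rw [normCons_cons_of_eq hI hK, normCons_cons_of_eq hI hK]
      exact cons _ h
    · rw [normCons_cons_of_ne hI hK, normCons_cons_of_ne hI hK]
      exact cons I (cons K h)

end WordDvd

theorem wordDvd_nf_nf_mul (a b : IntervalMonoid P) : WordDvd (nf a) (nf (a * b)) := by
  induction a using induction_on with
  | one => exact WordDvd.nil _
  | intv_mul I a ih => simpa only [mul_assoc, nf_intv_mul] using ih.normCons I

theorem dvd_iff_wordDvd {a b : IntervalMonoid P} : a ∣ b ↔ WordDvd (nf a) (nf b) := by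
  refine ⟨?_, fun h => by simpa only [ofWord_nf] using h.ofWord_dvd⟩
  rintro ⟨c, rfl⟩
  exact wordDvd_nf_nf_mul a c

theorem trivialUnits : TrivialUnits (IntervalMonoid P) := fun a ha =>
  nf_injective (dvd_iff_wordDvd.1 (ha.dvd : a ∣ 1)).eq_nil

theorem nf_head_ne (a : IntervalMonoid P) : ∀ K ∈ (nf a).head?, K.1.1 ≠ K.1.2 := by
  induction a using induction_on with
  | one => simp
  | intv_mul I a ih =>
    rw [nf_intv_mul]
    by_cases hI : I.1.1 = I.1.2
    · rwa [normCons_of_eq hI]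
    rcases h : nf a with _ | ⟨K, L⟩
    · simpa [normCons_nil hI] using hI
    by_cases hK : I.1.2 = K.1.1
    · rw [normCons_cons_of_eq hI hK]
      simp only [List.head?_cons, Option.mem_def, Option.some.injEq, forall_eq']
      intro h'
      have hK' : K.1.1 ≠ K.1.2 := ih K (by simp [h])
      exact hK' (le_antisymm K.2 (h' ▸ I.2.trans hK.le))
    · simpa [normCons_cons_of_ne hI hK] using hI

theorem normCons_inj {I : Iv P} (hI : I.1.1 ≠ I.1.2) {L L' : List (Iv P)}
    (hL : ∀ K ∈ L.head?, K.1.1 ≠ K.1.2) (hL' : ∀ K ∈ L'.head?, K.1.1 ≠ K.1.2)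
    (h : normCons I L = normCons I L') : L = L' := by
  rcases L with _ | ⟨K, L⟩ <;> rcases L' with _ | ⟨K', L'⟩
  · rfl
  all_goals simp only [normCons, if_neg hI] at h
  all_goals split_ifs at h <;> grind [Subtype.ext_iff, Prod.ext_iff]

instance : IsLeftCancelMul (IntervalMonoid P) where
  mul_left_cancel a := by
    induction a using induction_on with
    | one => exact isRegular_one.left
    | intv_mul I a ih =>
      intro b c h
      refine ih (nf_injective ?_)
      by_cases hI : I.1.1 = I.1.2
      · simpa [intv_eq_one hI] using congrArg nf h
      · refine normCons_inj hI (nf_head_ne _) (nf_head_ne _) ?_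
        simpa only [mul_assoc, nf_intv_mul] using congrArg nf h

def _root_.Iv.toDual (I : Iv P) : Iv Pᵒᵈ := ⟨(OrderDual.toDual I.1.2, OrderDual.toDual I.1.1), I.2⟩

noncomputable def reverse : IntervalMonoid P →* (IntervalMonoid Pᵒᵈ)ᵐᵒᵖ :=
  lift (fun I => op (intv I.toDual))
    (fun x y z hxy hyz => by
      rw [← MulOpposite.op_mul]
      exact congrArg op (intv_trans (x := OrderDual.toDual z) (y := OrderDual.toDual y)
        (z := OrderDual.toDual x) hyz hxy))
    (fun x => congrArg op (intv_self (OrderDual.toDual x)))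

theorem reverse_intv (I : Iv P) : reverse (intv I) = op (intv I.toDual) := lift_intv _ _ _ I

theorem unop_reverse_unop_reverse (a : IntervalMonoid P) :
    unop (reverse (P := Pᵒᵈ) (unop (reverse a))) = a := by
  induction a using induction_on with
  | one => rw [map_one, MulOpposite.unop_one, map_one]; rfl
  | intv_mul I a ih =>
    simp only [map_mul, reverse_intv, MulOpposite.unop_mul, MulOpposite.unop_op, ih]
    rfl

noncomputable def opMulEquivDual : (IntervalMonoid P)ᵐᵒᵖ ≃* IntervalMonoid Pᵒᵈ where
  toFun a := unop (reverse (unop a))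
  invFun b := op (unop (reverse b))
  left_inv a := congrArg op (unop_reverse_unop_reverse (unop a))
  right_inv := unop_reverse_unop_reverse
  map_mul' a b := by simp

instance : IsCancelMul (IntervalMonoid P) where
  mul_left_cancel := IsLeftCancelMul.mul_left_cancel
  mul_right_cancel a b c h := by
    apply MulOpposite.op_injective
    apply opMulEquivDual.injective
    apply mul_left_cancel (a := opMulEquivDual (op a))
    rw [← map_mul, ← map_mul, ← MulOpposite.op_mul, ← MulOpposite.op_mul]
    exact congrArg (fun x => opMulEquivDual (op x)) h

theorem hasRightGcds_iff_hasLeftGcds_dual :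
    HasRightGcds (IntervalMonoid P) ↔ HasLeftGcds (IntervalMonoid Pᵒᵈ) :=
  hasRightGcds_iff_hasLeftGcds_op.trans opMulEquivDual.hasLeftGcds_iff

namespace WordDvd

theorem eq_nil_or_singleton_of_ne {I J : Iv P} {A B E : List (Iv P)} (hIJ : I ≠ J)
    (hA : WordDvd E (I :: A)) (hB : WordDvd E (J :: B)) :
    E = [] ∨ ∃ K : Iv P, E = [K] ∧ K.1.1 = I.1.1 ∧ K.1.1 = J.1.1 ∧ K.1.2 ≤ I.1.2 ∧ K.1.2 ≤ J.1.2 := by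
  cases hA with
  | nil => exact Or.inl rfl
  | singleton _ hI hI' =>
    cases hB with
    | singleton _ hJ hJ' => exact Or.inr ⟨_, rfl, hI, hJ, hI', hJ'⟩
    | cons _ hB => exact Or.inr ⟨J, rfl, hI, rfl, hI', le_rfl⟩
  | cons _ hA =>
    cases hB with
    | singleton _ hJ hJ' => exact Or.inr ⟨I, rfl, rfl, hJ, le_rfl, hJ'⟩
    | cons _ hB => exact absurd rfl hIJ

theorem exists_gcd (h : LocalMeets P) : ∀ A B : List (Iv P),
    ∃ D, WordDvd D A ∧ WordDvd D B ∧ ∀ E, WordDvd E A → WordDvd E B → WordDvd E D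
  | [], B => ⟨[], nil _, nil _, fun _ hE _ => hE.eq_nil ▸ nil _⟩
  | A, [] => ⟨[], nil _, nil _, fun _ _ hE => hE.eq_nil ▸ nil _⟩
  | I :: A, J :: B => by
    by_cases hIJ : I = J
    · subst hIJ
      obtain ⟨D, hDA, hDB, hD⟩ := exists_gcd h A B
      refine ⟨I :: D, cons I hDA, cons I hDB, fun E hEA hEB => ?_⟩
      cases hEA with
      | nil => exact nil _
      | singleton _ hfst hsnd => exact singleton _ hfst hsnd
      | cons _ hEA =>
        cases hEB with
        | singleton => exact cons I (nil D)
        | cons _ hEB => exact cons I (hD _ hEA hEB)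
    by_cases hx : I.1.1 = J.1.1
    · obtain ⟨m, hxm, hmI, hmJ, hm⟩ := h I.1.1 I.1.2 J.1.2 I.2 (hx ▸ J.2)
      refine ⟨[⟨(I.1.1, m), hxm⟩], singleton A rfl hmI, singleton B hx hmJ, fun E hEA hEB => ?_⟩
      rcases eq_nil_or_singleton_of_ne hIJ hEA hEB with rfl | ⟨K, rfl, hKI, -, hKI', hKJ'⟩
      · exact nil _
      · exact singleton [] hKI (hm _ (hKI ▸ K.2) hKI' hKJ')
    · refine ⟨[], nil _, nil _, fun E hEA hEB => ?_⟩
      rcases eq_nil_or_singleton_of_ne hIJ hEA hEB with rfl | ⟨K, rfl, hKI, hKJ, -⟩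
      · exact nil _
      · exact absurd (hKI.symm.trans hKJ) hx

end WordDvd

theorem hasLeftGcds_of_localMeets (h : LocalMeets P) : HasLeftGcds (IntervalMonoid P) := by
  refine hasLeftGcds_iff_dvd.2 fun a b => ?_
  obtain ⟨D, hDa, hDb, hD⟩ := WordDvd.exists_gcd h (nf a) (nf b)
  refine ⟨ofWord D, ?_, ?_, fun e hea heb => ?_⟩
  · simpa using hDa.ofWord_dvd
  · simpa using hDb.ofWord_dvd
  · simpa using (hD _ (dvd_iff_wordDvd.1 hea) (dvd_iff_wordDvd.1 heb)).ofWord_dvd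

theorem nf_intv (I : Iv P) : nf (intv I) = normCons I [] := by
  simpa using nf_intv_mul I 1

theorem intv_inj_right {x t t' : P} {ht : x ≤ t} {ht' : x ≤ t'} :
    intv ⟨(x, t), ht⟩ = intv ⟨(x, t'), ht'⟩ ↔ t = t' := by
  refine ⟨fun h => ?_, fun h => by subst h; rfl⟩
  have := congrArg nf h
  simp only [nf_intv, normCons] at this
  split_ifs at this <;> grind [Subtype.ext_iff]

theorem dvd_intv_iff {e : IntervalMonoid P} {x y : P} (hxy : x ≤ y) :
    e ∣ intv ⟨(x, y), hxy⟩ ↔ ∃ t, ∃ hxt : x ≤ t, t ≤ y ∧ e = intv ⟨(x, t), hxt⟩ := by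
  refine ⟨fun h => ?_, ?_⟩
  · have hE := dvd_iff_wordDvd.1 h
    rw [nf_intv] at hE
    rw [← ofWord_nf e]
    generalize nf e = E at hE
    by_cases hx : x = y
    · rw [normCons_of_eq hx] at hE
      rw [hE.eq_nil]
      exact ⟨x, le_rfl, hxy, (intv_self x).symm⟩
    rw [normCons_nil hx] at hE
    cases hE with
    | nil => exact ⟨x, le_rfl, hxy, (intv_self x).symm⟩
    | singleton _ hfst hsnd =>
      rename_i K
      obtain ⟨⟨x', t⟩, hxt⟩ := K
      obtain rfl : x' = x := hfst
      exact ⟨t, hxt, hsnd, by simp⟩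
    | cons _ hE =>
      rw [hE.eq_nil]
      exact ⟨y, hxy, le_rfl, by simp⟩
  · rintro ⟨t, hxt, hty, rfl⟩
    rw [intv_trans hxt hty]
    exact dvd_mul_right _ _

theorem intv_dvd_intv_iff {x c m : P} (hc : x ≤ c) (hm : x ≤ m) :
    intv ⟨(x, c), hc⟩ ∣ intv ⟨(x, m), hm⟩ ↔ c ≤ m := by
  refine ⟨fun h => ?_, fun h => (dvd_intv_iff hm).2 ⟨c, hc, h, rfl⟩⟩
  obtain ⟨t, _, htm, heq⟩ := (dvd_intv_iff hm).1 h
  exact intv_inj_right.1 heq ▸ htm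

theorem localMeets_of_hasLeftGcds (h : HasLeftGcds (IntervalMonoid P)) : LocalMeets P := by
  intro x a b hxa hxb
  obtain ⟨d, hda, hdb, hd⟩ := hasLeftGcds_iff_dvd.1 h (intv ⟨(x, a), hxa⟩) (intv ⟨(x, b), hxb⟩)
  obtain ⟨m, hxm, hma, rfl⟩ := (dvd_intv_iff hxa).1 hda
  refine ⟨m, hxm, hma, (intv_dvd_intv_iff hxm hxb).1 hdb, fun c hxc hca hcb => ?_⟩
  exact (intv_dvd_intv_iff hxc hxm).1
    (hd _ ((intv_dvd_intv_iff hxc hxa).2 hca) ((intv_dvd_intv_iff hxc hxb).2 hcb))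

theorem hasLeftGcds_iff_localMeets : HasLeftGcds (IntervalMonoid P) ↔ LocalMeets P :=
  ⟨localMeets_of_hasLeftGcds, hasLeftGcds_of_localMeets⟩

end IntervalMonoid

/-- The interval monoid of `P` is a gcd-monoid if and only if `P` is a local lattice. -/
theorem intervalMonoid_gcdMonoid_iff_localLattice (P : Type*) [PartialOrder P] :
    GcdMonoidProp (IntervalMonoid P) ↔ LocalLattice P := by
  rw [localLattice_iff_localMeets, ← IntervalMonoid.hasLeftGcds_iff_localMeets,
    ← IntervalMonoid.hasLeftGcds_iff_localMeets,
    ← IntervalMonoid.hasRightGcds_iff_hasLeftGcds_dual]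
  exact ⟨fun h => h.2.2,
    fun h => ⟨cancellative_of_isCancelMul, IntervalMonoid.trivialUnits, h⟩⟩
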